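/- arXiv:1402.4072 — 2 statements merged into one kernel-verified Lean document; each statement's English description precedes it below -/
import Mathlib

section
/- For bilinear forms h_1,…,h_p and k_1,…,k_p on an n-dimensional Euclidean space, the composition product of the exterior products satisfies (h_1 h_2 ⋯ h_p) ∘ (k_1 k_2 ⋯ k_p) = Σ_{σ ∈ S_p} (h_1 ∘ k_{σ(1)}) ⋯ (h_p ∘ k_{σ(p)}). -/
/-
Double forms on the Euclidean space ℝⁿ, following Labbi's formalism.
A (p,q) double form is modelled as a real-valued function of a p-tuple and a
q-tuple of vectors (the relevant ones being those multilinear and alternating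
in each block, i.e. bilinear forms on Λ^p V × Λ^q V).
-/

open scoped BigOperators RealInnerProductSpace

noncomputable section

abbrev EucV (n : ℕ) := EuclideanSpace ℝ (Fin n)

/-- A (p,q) double form on ℝⁿ: a bilinear form on Λ^p V × Λ^q V, viewed as a
multilinear form skew-symmetric in the first p and in the last q arguments. -/
abbrev DF (n p q : ℕ) := (Fin p → EucV n) → (Fin q → EucV n) → ℝ

variable {n : ℕ}

/-- standard orthonormal basis of ℝⁿ -/
def bv (n : ℕ) (i : Fin n) : EucV n := EuclideanSpace.single i 1

/-- strictly increasing multi-indices of length p -/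
def Incr (n p : ℕ) : Finset (Fin p → Fin n) :=
  Finset.univ.filter (fun f => ∀ a b : Fin p, a < b → f a < f b)

/-- sign of a permutation, as a real number -/
def sgn {m : ℕ} (σ : Equiv.Perm (Fin m)) : ℝ := ((Equiv.Perm.sign σ : ℤ) : ℝ)

/-- exterior product of double forms:
(θ₁⊗θ₂)(θ₃⊗θ₄) = (θ₁∧θ₃)⊗(θ₂∧θ₄). -/
def extMul {p q r s : ℕ} (ω : DF n p q) (η : DF n r s) : DF n (p + r) (q + s) :=
  fun x y =>
    (p.factorial * r.factorial * q.factorial * s.factorial : ℝ)⁻¹ *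
      ∑ σ : Equiv.Perm (Fin (p + r)), ∑ τ : Equiv.Perm (Fin (q + s)),
        sgn σ * sgn τ *
          (ω (fun i => x (σ (Fin.castAdd r i))) (fun j => y (τ (Fin.castAdd s j))) *
            η (fun i => x (σ (Fin.natAdd p i))) (fun j => y (τ (Fin.natAdd q j))))

/-- composition (Greub) product of double forms: for ω₁ ∈ D^{p,q}, ω₂ ∈ D^{r,p},
(ω₁ ∘ ω₂)(u,v) = Σ_{i₁<…<i_p} ω₂(u, e_I) ω₁(e_I, v); it corresponds to the
composition of the associated operators on ΛV. -/
def compDF {p q r : ℕ} (ω₁ : DF n p q) (ω₂ : DF n r p) : DF n r q :=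
  fun u v => ∑ f ∈ Incr n p, ω₂ u (fun i => bv n (f i)) * ω₁ (fun i => bv n (f i)) v

/-- transpose of a double form -/
def transDF {p q : ℕ} (ω : DF n p q) : DF n q p := fun u v => ω v u

/-- re-indexing cast of a double form -/
def castDF {p q p' q' : ℕ} (hp : p = p') (hq : q = q') (ω : DF n p q) : DF n p' q' :=
  fun x y => ω (x ∘ Fin.cast hp) (y ∘ Fin.cast hq)

/-- Ricci contraction of double forms -/
def contractDF {p q : ℕ} (ω : DF n (p + 1) (q + 1)) : DF n p q :=
  fun x y => ∑ i : Fin n, ω (Fin.cons (bv n i) x) (Fin.cons (bv n i) y)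

/-- iterated contraction c^k -/
def contractIterDF {p q : ℕ} : (k : ℕ) → DF n (p + k) (q + k) → DF n p q
  | 0, ω => ω
  | k + 1, ω => contractIterDF k (contractDF ω)

/-- interior product i_ψ of double forms (the adjoint of left exterior
multiplication by ψ): for ψ ∈ D^{r,s} and ω ∈ D^{r+p,s+q},
(i_ψ ω)(x;y) = Σ_{I,J increasing} ψ(e_I;e_J) ω(e_I,x;e_J,y). -/
def interiorDF {r s p q : ℕ} (ψ : DF n r s) (ω : DF n (r + p) (s + q)) : DF n p q :=
  fun x y =>
    ∑ f ∈ Incr n r, ∑ g ∈ Incr n s,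
      ψ (fun i => bv n (f i)) (fun j => bv n (g j)) *
        ω (Fin.append (fun i => bv n (f i)) x) (Fin.append (fun j => bv n (g j)) y)

/-- inner product of (p,q) double forms, induced by the inner products of the
exterior powers -/
def innerDF {p q : ℕ} (ω η : DF n p q) : ℝ :=
  ∑ f ∈ Incr n p, ∑ g ∈ Incr n q,
    ω (fun i => bv n (f i)) (fun j => bv n (g j)) *
      η (fun i => bv n (f i)) (fun j => bv n (g j))

/-- the metric of ℝⁿ as a (1,1) double form -/
def gDF (n : ℕ) : DF n 1 1 := fun u v => (inner ℝ (u 0) (v 0) : ℝ)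

/-- exterior powers of a (1,1) double form -/
def powDF (h : DF n 1 1) : (p : ℕ) → DF n p p
  | 0 => fun _ _ => 1
  | p + 1 => extMul (powDF h p) h

/-- exterior product h₁h₂⋯h_p of a family of (1,1) double forms -/
def extProdDF : {p : ℕ} → (Fin p → DF n 1 1) → DF n p p
  | 0, _ => fun _ _ => 1
  | p + 1, h => extMul (extProdDF fun i => h i.castSucc) (h (Fin.last p))

/-- determinant (volume form) of an n-tuple of vectors of ℝⁿ -/
def volDF (n : ℕ) (v : Fin n → EucV n) : ℝ :=
  Matrix.det (Matrix.of fun i j => (inner ℝ (bv n i) (v j) : ℝ))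

/-- double Hodge star operator on double forms:
*(θ₁⊗θ₂) = (*θ₁)⊗(*θ₂), given here by the classical formula
(*α)(x) = Σ_{I increasing} α(e_I) vol(e_I, x) applied in each slot. -/
def starDF {p q : ℕ} (hp : p ≤ n) (hq : q ≤ n) (ω : DF n p q) : DF n (n - p) (n - q) :=
  fun x y =>
    ∑ f ∈ Incr n p, ∑ g ∈ Incr n q,
      ω (fun i => bv n (f i)) (fun j => bv n (g j)) *
        volDF n (Fin.append (fun i => bv n (f i)) x ∘ Fin.cast (Nat.add_sub_cancel' hp).symm) *
        volDF n (Fin.append (fun j => bv n (g j)) y ∘ Fin.cast (Nat.add_sub_cancel' hq).symm)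

/-- the endomorphism h̄ associated to a bilinear form h: ⟪h̄ v, w⟫ = h(v,w) -/
def hbar (h : DF n 1 1) (v : EucV n) : EucV n :=
  ∑ j : Fin n, h ![v] ![bv n j] • bv n j

/-- the adjoint endomorphism h̄*: ⟪v, h̄* w⟫ = h(v,w) -/
def hbarAdj (h : DF n 1 1) (v : EucV n) : EucV n :=
  ∑ i : Fin n, h ![bv n i] ![v] • bv n i

/-- the right extension ĥ_R = id ⊗ ĥ of (the exterior-algebra extension ĥ of) h̄,
acting on double forms via the metric identification with double vectors -/
def hhatR {p q : ℕ} (h : DF n 1 1) (ω : DF n p q) : DF n p q :=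
  fun x y => ω x (fun j => hbarAdj h (y j))

/-- determinant of (the endomorphism associated to) a bilinear form -/
def detDF (h : DF n 1 1) : ℝ :=
  Matrix.det (Matrix.of fun i j : Fin n => h ![bv n i] ![bv n j])

/-- omit one member of a family -/
def omit1 {α : Sort*} {p : ℕ} (h : Fin (p + 1) → α) (j : Fin (p + 1)) : Fin p → α :=
  fun i => h (j.succAbove i)

/-- omit two members of a family -/
def omit2 {α : Sort*} {p : ℕ} (h : Fin (p + 2) → α) (j k : Fin (p + 2)) (hjk : j < k) :
    Fin p → α :=
  omit1 (omit1 h k) ⟨j.1, by have h1 : j.1 < k.1 := hjk; have h2 : k.1 < p + 2 := k.isLt; omega⟩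

/-- the first Bianchi map 𝔖 : D^{p,q+1} → D^{p+1,q} -/
def bianchiDF {p q : ℕ} (ω : DF n p (q + 1)) : DF n (p + 1) q :=
  fun x y =>
    (p.factorial : ℝ)⁻¹ *
      ∑ σ : Equiv.Perm (Fin (p + 1)),
        sgn σ * ω (fun i => x (σ i.castSucc)) (Fin.cons (x (σ (Fin.last p))) y)

/-- the alternating operator Alt : D^{p,p} → Λ^{2p} -/
def altDF {p : ℕ} (ω : DF n p p) : (Fin (p + p) → EucV n) → ℝ :=
  fun v =>
    ((p + p).factorial : ℝ)⁻¹ *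
      ∑ σ : Equiv.Perm (Fin (p + p)),
        sgn σ * ω (fun i => v (σ (Fin.castAdd p i))) (fun i => v (σ (Fin.natAdd p i)))

/-- exterior powers of a (2,2) double form -/
def pow2DF (R : DF n 2 2) : (k : ℕ) → DF n (2 * k) (2 * k)
  | 0 => fun _ _ => 1
  | k + 1 => extMul (pow2DF R k) R

/-- the diagonal simple double form (v₁∧…∧v_p) ⊗ (v₁∧…∧v_p), as a bilinear form -/
def simpleDiag {p : ℕ} (v : Fin p → EucV n) : DF n p p :=
  fun x y =>
    Matrix.det (Matrix.of fun i j => (inner ℝ (v i) (x j) : ℝ)) *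
      Matrix.det (Matrix.of fun i j => (inner ℝ (v i) (y j) : ℝ))

/-!
Evaluated at `(x, y)`, the exterior product `h₁⋯h_p` is
`∑_{σ,τ} sgn σ sgn τ ∏ᵢ hᵢ(x_{σ i}, y_{τ i})`: inserting two such sums into the exterior product
produces each term of the sum for the concatenated family `(p! r!)²` times, which is exactly the
normalisation of the exterior product.

The composition product sums `(k₁⋯k_p)(u, e_I) (h₁⋯h_p)(e_I, v)` over increasing `I`. The second
factor is alternating in `e_I` and vanishes on repeated indices, so one of the two alternations of
the first factor turns the sum over increasing `I` into a sum over all tuples `f : Fin p → Fin n`.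
That sum factors coordinatewise into `∑ₘ kⱼ(u_a, e_m) hᵢ(e_m, v_b) = (hᵢ ∘ kⱼ)(u_a, v_b)`, and
re-indexing the remaining permutations gives `∑_ρ (h₁ ∘ k_{ρ 1})⋯(h_p ∘ k_{ρ p})`.
-/

open Finset Equiv

variable {m p q r : ℕ}

lemma sgn_mul (σ τ : Perm (Fin m)) : sgn (σ * τ) = sgn σ * sgn τ := by
  simp [sgn]

lemma sgn_mul_self (σ : Perm (Fin m)) : sgn σ * sgn σ = 1 := by
  simp [sgn, ← Int.cast_mul, ← Units.val_mul]

lemma sgn_swap {i j : Fin m} (hij : i ≠ j) : sgn (swap i j) = -1 := by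
  simp [sgn, Perm.sign_swap hij]

lemma mem_Incr_iff {f : Fin p → Fin n} : f ∈ Incr n p ↔ StrictMono f := by
  simp [Incr, StrictMono]

lemma sum_Incr_sum_perm_comp {M : Type*} [AddCommMonoid M]
    (G : (Fin p → Fin n) → M) :
    ∑ g ∈ Incr n p, ∑ π : Perm (Fin p), G (g ∘ π) =
      ∑ f with Function.Injective f, G f := by
  rw [← Finset.sum_product']
  refine Finset.sum_bij (fun gπ _ => gπ.1 ∘ gπ.2) ?_ ?_ ?_ (fun _ _ => rfl)
  · rintro ⟨g, π⟩ hgπ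
    simp only [mem_product, mem_Incr_iff, mem_univ, and_true] at hgπ
    simpa using hgπ.injective.comp π.injective
  · rintro ⟨g, π⟩ hgπ ⟨g', π'⟩ hgπ' heq
    simp only [mem_product, mem_Incr_iff, mem_univ, and_true] at hgπ hgπ'
    have hrange : Set.range g = Set.range g' := by
      rw [← π.surjective.range_comp g, ← π'.surjective.range_comp g']
      exact congrArg Set.range heq
    obtain rfl : g = g' := (hgπ.range_inj hgπ').mp hrange
    exact Prod.ext rfl (Equiv.ext fun i => hgπ.injective (congrFun heq i))
  · intro f hf
    have hf : Function.Injective f := by simpa using hf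
    refine ⟨(f ∘ Tuple.sort f, (Tuple.sort f)⁻¹), ?_, ?_⟩
    · simpa [mem_product, mem_Incr_iff] using
        (Tuple.monotone_sort f).strictMono_of_injective (hf.comp (Tuple.sort f).injective)
    · funext i
      simp

lemma sum_Incr_alternatization_mul (A B : (Fin p → Fin n) → ℝ)
    (hB : ∀ f (π : Perm (Fin p)), B (f ∘ π) = sgn π * B f)
    (hB₀ : ∀ f, ¬Function.Injective f → B f = 0) :
    ∑ f ∈ Incr n p, (∑ τ : Perm (Fin p), sgn τ * A (f ∘ τ)) * B f = ∑ f, A f * B f := by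
  have hterm : ∀ f (τ : Perm (Fin p)), sgn τ * A (f ∘ τ) * B f = A (f ∘ τ) * B (f ∘ τ) := by
    intro f τ
    rw [hB]
    ring
  simp_rw [Finset.sum_mul, hterm]
  rw [sum_Incr_sum_perm_comp (fun f => A f * B f), Finset.sum_filter]
  refine Finset.sum_congr rfl fun f _ => ?_
  split_ifs with hf
  · rfl
  · rw [hB₀ f hf, mul_zero]

/-- `p!` times the mixed discriminant of the matrices `T i`. -/
def mixedDet (T : Fin p → Fin p → Fin p → ℝ) : ℝ :=
  ∑ σ : Perm (Fin p), ∑ τ : Perm (Fin p), sgn σ * sgn τ * ∏ i, T i (σ i) (τ i)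

lemma mixedDet_eq_sum_sgn_mul (T : Fin p → Fin p → Fin p → ℝ) :
    mixedDet T = ∑ τ : Perm (Fin p), sgn τ * ∑ σ : Perm (Fin p), sgn σ * ∏ i, T i (σ i) (τ i) := by
  rw [mixedDet, Finset.sum_comm]
  simp_rw [Finset.mul_sum]
  exact Finset.sum_congr rfl fun _ _ => Finset.sum_congr rfl fun _ _ => by ring

lemma mixedDet_comp_left (T : Fin p → Fin p → Fin p → ℝ) (π : Perm (Fin p)) :
    mixedDet (fun i a b => T i (π a) b) = sgn π * mixedDet T := by
  rw [mixedDet, mixedDet, Finset.mul_sum]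
  conv_rhs => rw [← Equiv.sum_comp (Equiv.mulLeft π)]
  refine Finset.sum_congr rfl fun σ _ => ?_
  simp_rw [Finset.mul_sum, Equiv.coe_mulLeft, Perm.mul_apply, sgn_mul]
  refine Finset.sum_congr rfl fun τ _ => ?_
  linear_combination (-(sgn σ * sgn τ * ∏ i, T i (π (σ i)) (τ i))) * sgn_mul_self π

lemma mixedDet_eq_zero_of_left (T : Fin p → Fin p → Fin p → ℝ) {a a' : Fin p}
    (haa' : a ≠ a') (hT : ∀ i b, T i a b = T i a' b) : mixedDet T = 0 := by
  have hswap : (fun i c b => T i (swap a a' c) b) = T := by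
    funext i c b
    rcases eq_or_ne c a with rfl | hca
    · rw [swap_apply_left, hT]
    rcases eq_or_ne c a' with rfl | hca'
    · rw [swap_apply_right, hT]
    · rw [swap_apply_of_ne_of_ne hca hca']
  have h := mixedDet_comp_left T (swap a a')
  rw [hswap, sgn_swap haa'] at h
  linarith

lemma sum_pi_prod_mul_prod_comp (X Y : Fin p → Fin n → ℝ) (σ : Perm (Fin p)) :
    ∑ f : Fin p → Fin n, (∏ i, X i (f i)) * ∏ i, Y i (f (σ i)) =
      ∏ i, ∑ m, X (σ i) m * Y i m := by
  rw [Fintype.prod_sum]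
  refine Fintype.sum_equiv (σ.arrowCongr (Equiv.refl _)).symm _ _ fun f => ?_
  rw [← Equiv.prod_comp σ, ← Finset.prod_mul_distrib]
  rfl

theorem sum_Incr_mixedDet_mul_mixedDet (K : Fin p → Fin p → Fin n → ℝ)
    (H : Fin p → Fin n → Fin p → ℝ) :
    ∑ f ∈ Incr n p, mixedDet (fun i a b => K i a (f b)) * mixedDet (fun i a b => H i (f a) b) =
      ∑ ρ : Perm (Fin p), mixedDet (fun i a b => ∑ m, K (ρ i) a m * H i m b) := by
  set A : (Fin p → Fin n) → ℝ := fun f => ∑ α : Perm (Fin p), sgn α * ∏ i, K i (α i) (f i)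
  set B : (Fin p → Fin n) → ℝ := fun f => mixedDet (fun i a b => H i (f a) b)
  have hB : ∀ f (π : Perm (Fin p)), B (f ∘ π) = sgn π * B f := fun f π =>
    mixedDet_comp_left (fun i a b => H i (f a) b) π
  have hB₀ : ∀ f, ¬Function.Injective f → B f = 0 := by
    intro f hf
    obtain ⟨a, a', hfa, haa'⟩ := Function.not_injective_iff.mp hf
    exact mixedDet_eq_zero_of_left _ haa' fun i b => by rw [hfa]
  have hexpand : ∀ f, A f * B f = ∑ σ : Perm (Fin p), ∑ τ : Perm (Fin p), ∑ α : Perm (Fin p),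
      sgn σ * sgn α * sgn τ * ((∏ i, K i (α i) (f i)) * ∏ i, H i (f (σ i)) (τ i)) := by
    intro f
    simp only [A, B, mixedDet, Finset.sum_mul, Finset.mul_sum]
    exact Finset.sum_congr rfl fun _ _ => Finset.sum_congr rfl fun _ _ =>
      Finset.sum_congr rfl fun _ _ => by ring
  calc _ = ∑ f ∈ Incr n p, (∑ τ : Perm (Fin p), sgn τ * A (f ∘ τ)) * B f := by
        refine Finset.sum_congr rfl fun f _ => ?_
        rw [mixedDet_eq_sum_sgn_mul (fun i a b => K i a (f b))]
        rfl
    _ = ∑ f, A f * B f := sum_Incr_alternatization_mul A B hB hB₀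
    _ = ∑ σ : Perm (Fin p), ∑ τ : Perm (Fin p), ∑ α : Perm (Fin p), sgn σ * sgn α * sgn τ *
          ∏ i, ∑ m, K (σ i) (α (σ i)) m * H i m (τ i) := by
        simp_rw [hexpand]
        rw [Finset.sum_comm]
        refine Finset.sum_congr rfl fun σ _ => ?_
        rw [Finset.sum_comm]
        refine Finset.sum_congr rfl fun τ _ => ?_
        rw [Finset.sum_comm]
        refine Finset.sum_congr rfl fun α _ => ?_
        rw [← Finset.mul_sum,
          sum_pi_prod_mul_prod_comp (fun i m => K i (α i) m) (fun i m => H i m (τ i)) σ]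
    _ = _ := by
        refine Finset.sum_congr rfl fun σ _ => ?_
        rw [Finset.sum_comm]
        conv_rhs => rw [mixedDet, ← Equiv.sum_comp (Equiv.mulRight σ)]
        refine Finset.sum_congr rfl fun α _ => Finset.sum_congr rfl fun τ _ => ?_
        simp only [Equiv.coe_mulRight, Perm.mul_apply, sgn_mul]
        ring

def finAppendPerm (ρ : Perm (Fin p) × Perm (Fin r)) : Perm (Fin (p + r)) :=
  finSumFinEquiv.permCongr (ρ.1.sumCongr ρ.2)

lemma finAppendPerm_castAdd (ρ : Perm (Fin p) × Perm (Fin r)) (i : Fin p) :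
    finAppendPerm ρ (Fin.castAdd r i) = Fin.castAdd r (ρ.1 i) := by
  simp [finAppendPerm, Equiv.permCongr_apply]

lemma finAppendPerm_natAdd (ρ : Perm (Fin p) × Perm (Fin r)) (j : Fin r) :
    finAppendPerm ρ (Fin.natAdd p j) = Fin.natAdd p (ρ.2 j) := by
  simp [finAppendPerm, Equiv.permCongr_apply]

lemma sgn_finAppendPerm (ρ : Perm (Fin p) × Perm (Fin r)) :
    sgn (finAppendPerm ρ) = sgn ρ.1 * sgn ρ.2 := by
  simp [sgn, finAppendPerm, Perm.sign_permCongr, Perm.sign_sumCongr]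

lemma sum_sum_sgn_mul_comp_mul_right (Φ : Perm (Fin m) → Perm (Fin m) → ℝ)
    (ρ ρ' : Perm (Fin m)) :
    ∑ σ : Perm (Fin m), ∑ τ : Perm (Fin m), sgn (σ * ρ) * sgn (τ * ρ') * Φ (σ * ρ) (τ * ρ') =
      ∑ σ : Perm (Fin m), ∑ τ : Perm (Fin m), sgn σ * sgn τ * Φ σ τ :=
  Fintype.sum_equiv (Equiv.mulRight ρ) _ _ fun _ =>
    Fintype.sum_equiv (Equiv.mulRight ρ') _ _ fun _ => rfl

def mixedForm (h : Fin p → DF n 1 1) : DF n p p :=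
  fun x y => mixedDet (fun i a b => h i ![x a] ![y b])

lemma mixedForm_mul_mixedForm (h₁ : Fin p → DF n 1 1) (h₂ : Fin r → DF n 1 1)
    (x y : Fin (p + r) → EucV n) :
    mixedForm h₁ (x ∘ Fin.castAdd r) (y ∘ Fin.castAdd r) *
        mixedForm h₂ (x ∘ Fin.natAdd p) (y ∘ Fin.natAdd p) =
      ∑ ρ : Perm (Fin p) × Perm (Fin r), ∑ ρ' : Perm (Fin p) × Perm (Fin r),
        sgn (finAppendPerm ρ) * sgn (finAppendPerm ρ') *
          ∏ k, Fin.append h₁ h₂ k ![x (finAppendPerm ρ k)] ![y (finAppendPerm ρ' k)] := by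
  simp only [mixedForm, mixedDet, Finset.sum_mul_sum, Fintype.sum_prod_type, Fin.prod_univ_add,
    Fin.append_left, Fin.append_right, finAppendPerm_castAdd, finAppendPerm_natAdd,
    sgn_finAppendPerm, Function.comp_apply]
  exact Finset.sum_congr rfl fun _ _ => Finset.sum_congr rfl fun _ _ =>
    Finset.sum_congr rfl fun _ _ => Finset.sum_congr rfl fun _ _ => by ring

lemma extMul_mixedForm (h₁ : Fin p → DF n 1 1) (h₂ : Fin r → DF n 1 1) :
    extMul (mixedForm h₁) (mixedForm h₂) = mixedForm (Fin.append h₁ h₂) := by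
  funext x y
  set Φ : Perm (Fin (p + r)) → Perm (Fin (p + r)) → ℝ :=
    fun α β => ∏ k, Fin.append h₁ h₂ k ![x (α k)] ![y (β k)]
  have hΦ : mixedForm (Fin.append h₁ h₂) x y = ∑ σ, ∑ τ, sgn σ * sgn τ * Φ σ τ := rfl
  have hcard : (Fintype.card (Perm (Fin p) × Perm (Fin r)) : ℝ) = p.factorial * r.factorial := by
    simp [Fintype.card_perm]
  calc extMul (mixedForm h₁) (mixedForm h₂) x y
      = (p.factorial * r.factorial * p.factorial * r.factorial : ℝ)⁻¹ *
          ∑ σ, ∑ τ, sgn σ * sgn τ * ∑ ρ : Perm (Fin p) × Perm (Fin r),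
            ∑ ρ' : Perm (Fin p) × Perm (Fin r), sgn (finAppendPerm ρ) * sgn (finAppendPerm ρ') *
              Φ (σ * finAppendPerm ρ) (τ * finAppendPerm ρ') := by
        rw [extMul]
        congr 1
        refine Finset.sum_congr rfl fun σ _ => Finset.sum_congr rfl fun τ _ => ?_
        exact congrArg (sgn σ * sgn τ * ·) (mixedForm_mul_mixedForm h₁ h₂ (x ∘ σ) (y ∘ τ))
    _ = (p.factorial * r.factorial * p.factorial * r.factorial : ℝ)⁻¹ *
          ∑ ρ : Perm (Fin p) × Perm (Fin r), ∑ ρ' : Perm (Fin p) × Perm (Fin r),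
            ∑ σ, ∑ τ, sgn (σ * finAppendPerm ρ) * sgn (τ * finAppendPerm ρ') *
              Φ (σ * finAppendPerm ρ) (τ * finAppendPerm ρ') := by
        refine congrArg ((p.factorial * r.factorial * p.factorial * r.factorial : ℝ)⁻¹ * ·) ?_
        simp_rw [Finset.mul_sum, sgn_mul]
        calc _ = ∑ σ, ∑ ρ : Perm (Fin p) × Perm (Fin r), ∑ τ, ∑ ρ' : Perm (Fin p) × Perm (Fin r),
              sgn σ * sgn τ * (sgn (finAppendPerm ρ) * sgn (finAppendPerm ρ') *
                Φ (σ * finAppendPerm ρ) (τ * finAppendPerm ρ')) :=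
              Finset.sum_congr rfl fun _ _ => Finset.sum_comm
          _ = _ := by
              rw [Finset.sum_comm]
              refine Finset.sum_congr rfl fun ρ _ => ?_
              rw [Finset.sum_congr rfl fun σ _ => Finset.sum_comm, Finset.sum_comm]
              exact Finset.sum_congr rfl fun _ _ => Finset.sum_congr rfl fun _ _ =>
                Finset.sum_congr rfl fun _ _ => by ring
    _ = mixedForm (Fin.append h₁ h₂) x y := by
        simp_rw [sum_sum_sgn_mul_comp_mul_right, ← hΦ, Finset.sum_const, Finset.card_univ,
          nsmul_eq_mul, hcard]
        field_simp

lemma mixedForm_fin_zero (h : Fin 0 → DF n 1 1) : mixedForm h = fun _ _ => 1 := by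
  funext x y
  simp [mixedForm, mixedDet, sgn]

lemma vec_fin_one_eta {α : Type*} (w : Fin 1 → α) : ![w 0] = w :=
  funext fun i => by rw [Subsingleton.elim i 0]; rfl

lemma mixedForm_fin_one (ω : DF n 1 1) : mixedForm ![ω] = ω := by
  funext x y
  simp [mixedForm, mixedDet, sgn, vec_fin_one_eta]

lemma extProdDF_eq_mixedForm (h : Fin p → DF n 1 1) : extProdDF h = mixedForm h := by
  induction p with
  | zero => exact (mixedForm_fin_zero h).symm
  | succ p ih =>
    calc extProdDF h = extMul (extProdDF (Fin.init h)) (h (Fin.last p)) := rfl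
      _ = mixedForm (Fin.append (Fin.init h) ![h (Fin.last p)]) := by
        rw [ih, ← extMul_mixedForm, mixedForm_fin_one]
      _ = mixedForm h := by
        rw [Fin.append_right_eq_snoc, Matrix.cons_val_zero, Fin.snoc_init_self]

lemma compDF_fin_one_apply (ω₁ : DF n 1 q) (ω₂ : DF n r 1) (u : Fin r → EucV n)
    (v : Fin q → EucV n) :
    compDF ω₁ ω₂ u v = ∑ m, ω₂ u ![bv n m] * ω₁ ![bv n m] v := by
  have hIncr : Incr n 1 = Finset.univ := by
    ext f
    simp [Incr]
  rw [compDF, hIncr]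
  refine Fintype.sum_equiv (Equiv.funUnique (Fin 1) (Fin n)) _ _ fun f => ?_
  rw [← vec_fin_one_eta (fun i => bv n (f i))]
  rfl

/-- Greub–Vanstone basic identity:
(h₁h₂⋯h_p) ∘ (k₁k₂⋯k_p) = Σ_{σ∈S_p} (h₁∘k_{σ(1)})⋯(h_p∘k_{σ(p)}). -/
theorem stmt1 (n p : ℕ) (h k : Fin p → DF n 1 1) :
    compDF (extProdDF h) (extProdDF k) =
      ∑ σ : Equiv.Perm (Fin p), extProdDF (fun i => compDF (h i) (k (σ i))) := by
  funext u v
  simp only [extProdDF_eq_mixedForm, Finset.sum_apply]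
  refine (sum_Incr_mixedDet_mul_mixedDet (fun i a m => k i ![u a] ![bv n m])
    (fun i m b => h i ![bv n m] ![v b])).trans ?_
  simp only [mixedForm, compDF_fin_one_apply]
end
end

section
/- The double Hodge star operator is a homomorphism for the composition product of double forms: for any double forms ω_1, ω_2, one has *(ω_1 ∘ ω_2) = (*ω_1) ∘ (*ω_2). -/
/-
Double forms on the Euclidean space ℝⁿ, following Labbi's formalism.
A (p,q) double form is modelled as a real-valued function of a p-tuple and a
q-tuple of vectors (the relevant ones being those multilinear and alternating
in each block, i.e. bilinear forms on Λ^p V × Λ^q V).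
-/

open scoped BigOperators RealInnerProductSpace

noncomputable section

variable {n : ℕ}

/-! For increasing multi-indices `I` of length `p` and `J` of length `n - p` put
`W I J = vol(e_I, e_J)`. Expanding both sides in coordinates, `(*ω₁) ∘ (*ω₂)` is
`*(ω₁ ∘ ω₂)` with the matrix product `W Wᵀ` inserted in the middle. That product is the
identity: `W I J ≠ 0` forces `I` and `J` to be complementary, so that each determines the
other, and then `W I J = ±1`. -/

open Finset

lemma mem_Incr {p : ℕ} {f : Fin p → Fin n} : f ∈ Incr n p ↔ StrictMono f := by
  simp [Incr, StrictMono]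

lemma bv_eq_basisFun (n : ℕ) : bv n = ⇑(EuclideanSpace.basisFun (Fin n) ℝ).toBasis := by
  funext i
  simp [bv]

lemma volDF_eq_basisFun_det (n : ℕ) :
    volDF n = ⇑(EuclideanSpace.basisFun (Fin n) ℝ).toBasis.det := by
  funext v
  rw [Module.Basis.det_apply, volDF]
  congr 1
  ext i j
  simp [Module.Basis.toMatrix_apply, bv, EuclideanSpace.inner_single_left]

lemma volDF_bv_comp_of_not_injective {k : Fin n → Fin n} (hk : ¬ Function.Injective k) :
    volDF n (bv n ∘ k) = 0 := by
  rw [volDF_eq_basisFun_det]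
  refine AlternatingMap.map_eq_zero_of_not_injective _ _ fun h => hk ?_
  exact (Function.Injective.of_comp_iff (bv_eq_basisFun n ▸ Module.Basis.injective _) k).mp h

lemma volDF_bv_comp_mul_self {k : Fin n → Fin n} (hk : Function.Injective k) :
    volDF n (bv n ∘ k) * volDF n (bv n ∘ k) = 1 := by
  set σ := Equiv.ofBijective k (Finite.injective_iff_bijective.mp hk)
  have hvol : volDF n (bv n ∘ k) = (Equiv.Perm.sign σ : ℤ) := by
    rw [volDF_eq_basisFun_det, bv_eq_basisFun, show k = ⇑σ from rfl,
      AlternatingMap.map_perm, Module.Basis.det_self, Units.smul_def, zsmul_eq_mul, mul_one]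
  rw [hvol, ← Int.cast_mul, ← Units.val_mul, Int.units_mul_self, Units.val_one, Int.cast_one]

lemma append_bv_comp {p m : ℕ} (f : Fin p → Fin n) (g : Fin m → Fin n) :
    Fin.append (fun i => bv n (f i)) (fun j => bv n (g j)) = bv n ∘ Fin.append f g := by
  funext i
  refine Fin.addCases (fun i => ?_) (fun j => ?_) i <;> simp

lemma volDF_append_bv_eq_zero {p m : ℕ} (hpm : p + m = n) {f : Fin p → Fin n}
    {g : Fin m → Fin n} (H : ¬ Function.Injective (Fin.append f g)) :
    volDF n (Fin.append (fun i => bv n (f i)) (fun j => bv n (g j)) ∘ Fin.cast hpm.symm) = 0 := by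
  rw [append_bv_comp]
  exact volDF_bv_comp_of_not_injective fun H' =>
    H ((Function.Injective.of_comp_iff' _ (finCongr hpm.symm).bijective).mp H')

lemma volDF_append_bv_mul_self {p m : ℕ} (hpm : p + m = n) {f : Fin p → Fin n}
    {g : Fin m → Fin n} (H : Function.Injective (Fin.append f g)) :
    volDF n (Fin.append (fun i => bv n (f i)) (fun j => bv n (g j)) ∘ Fin.cast hpm.symm) *
      volDF n (Fin.append (fun i => bv n (f i)) (fun j => bv n (g j)) ∘ Fin.cast hpm.symm) =
      1 := by
  rw [append_bv_comp]
  exact volDF_bv_comp_mul_self (H.comp (finCongr hpm.symm).injective)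

lemma isCompl_range_of_injective_append {p m n : ℕ} (hpm : p + m = n)
    {f : Fin p → Fin n} {g : Fin m → Fin n} (H : Function.Injective (Fin.append f g)) :
    IsCompl (Set.range f) (Set.range g) := by
  have hsurj : Function.Surjective (Fin.append f g) :=
    (Finite.injective_iff_surjective_of_equiv (finCongr hpm)).mp H
  refine ⟨Set.disjoint_range_iff.mpr (Fin.append_injective_iff.mp H).2.2, ?_⟩
  rw [codisjoint_iff_le_sup]
  rintro x -
  obtain ⟨i, rfl⟩ := hsurj x
  refine Fin.addCases (fun i => ?_) (fun j => ?_) i <;> simp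

lemma exists_strictMono_injective_append {p n : ℕ} {f : Fin p → Fin n}
    (hf : Function.Injective f) :
    ∃ g : Fin (n - p) → Fin n, StrictMono g ∧ Function.Injective (Fin.append f g) := by
  have hcard : (univ.image f)ᶜ.card = n - p := by
    rw [card_compl, card_image_of_injective _ hf, card_univ, Fintype.card_fin, Fintype.card_fin]
  set g := (univ.image f)ᶜ.orderEmbOfFin hcard
  refine ⟨g, g.strictMono, Fin.append_injective_iff.mpr ⟨hf, g.injective, fun i j hij => ?_⟩⟩
  have hg : g j ∈ (univ.image f)ᶜ := orderEmbOfFin_mem _ _ j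
  exact mem_compl.mp hg (hij ▸ mem_image_of_mem f (mem_univ i))

lemma sum_volDF_append_bv_mul {p : ℕ} (hp : p ≤ n) {f f' : Fin p → Fin n}
    (hf : StrictMono f) (hf' : StrictMono f') :
    ∑ g ∈ Incr n (n - p),
      volDF n (Fin.append (fun i => bv n (f i)) (fun j => bv n (g j)) ∘
          Fin.cast (Nat.add_sub_cancel' hp).symm) *
        volDF n (Fin.append (fun i => bv n (f' i)) (fun j => bv n (g j)) ∘
          Fin.cast (Nat.add_sub_cancel' hp).symm) =
      if f = f' then 1 else 0 := by
  have hpm := Nat.add_sub_cancel' hp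
  split_ifs with hff'
  · subst hff'
    obtain ⟨g₀, hg₀, H₀⟩ := exists_strictMono_injective_append hf.injective
    rw [sum_eq_single_of_mem g₀ (mem_Incr.mpr hg₀), volDF_append_bv_mul_self hpm H₀]
    intro g hg hne
    rw [volDF_append_bv_eq_zero hpm, zero_mul]
    intro H
    refine hne ((hg₀.range_inj (mem_Incr.mp hg)).mp ?_).symm
    rw [← (isCompl_range_of_injective_append hpm H₀).compl_eq,
      (isCompl_range_of_injective_append hpm H).compl_eq]
  · refine sum_eq_zero fun g hg => ?_
    by_cases H : Function.Injective (Fin.append f g)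
    · rw [volDF_append_bv_eq_zero hpm (f := f') fun H' => hff' ?_, mul_zero]
      rw [← hf.range_inj hf', ← (isCompl_range_of_injective_append hpm H).symm.compl_eq,
        (isCompl_range_of_injective_append hpm H').symm.compl_eq]
    · rw [volDF_append_bv_eq_zero hpm H, zero_mul]

lemma Finset.sum_mul_sum_of_orthonormal {ι κ R : Type*} [CommSemiring R] [DecidableEq ι]
    {s : Finset ι} {t : Finset κ} {W : ι → κ → R}
    (hW : ∀ i ∈ s, ∀ j ∈ s, ∑ k ∈ t, W i k * W j k = if i = j then 1 else 0) (α β : ι → R) :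
    ∑ k ∈ t, (∑ i ∈ s, α i * W i k) * (∑ j ∈ s, β j * W j k) = ∑ i ∈ s, α i * β i := by
  calc ∑ k ∈ t, (∑ i ∈ s, α i * W i k) * (∑ j ∈ s, β j * W j k)
      = ∑ i ∈ s, ∑ j ∈ s, α i * β j * ∑ k ∈ t, W i k * W j k := by
        simp only [sum_mul_sum]
        simp only [mul_sum]
        exact sum_comm.trans <| sum_congr rfl fun i _ => sum_comm.trans <|
          sum_congr rfl fun j _ => sum_congr rfl fun k _ => by ring
    _ = ∑ i ∈ s, α i * β i := by
        refine sum_congr rfl fun i hi => ?_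
        rw [sum_congr rfl fun j hj => by rw [hW i hi j hj]]
        simp [hi]

lemma Finset.sum_sum_mul_sum_sum_of_orthonormal {ι ι₁ ι₂ κ R : Type*} [CommSemiring R]
    [DecidableEq ι] {s : Finset ι} {t : Finset κ} {W : ι → κ → R}
    (hW : ∀ i ∈ s, ∀ j ∈ s, ∑ k ∈ t, W i k * W j k = if i = j then 1 else 0)
    (s₁ : Finset ι₁) (s₂ : Finset ι₂) (a : ι₁ → ι → R) (b : ι → ι₂ → R) (u : ι₁ → R)
    (v : ι₂ → R) :
    ∑ k ∈ t, (∑ f ∈ s₁, ∑ i ∈ s, a f i * u f * W i k) *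
        (∑ j ∈ s, ∑ g ∈ s₂, b j g * W j k * v g) =
      ∑ f ∈ s₁, ∑ g ∈ s₂, (∑ i ∈ s, a f i * b i g) * u f * v g := by
  have hα : ∀ k, ∑ f ∈ s₁, ∑ i ∈ s, a f i * u f * W i k =
      ∑ i ∈ s, (∑ f ∈ s₁, a f i * u f) * W i k := by
    intro k
    simp only [sum_mul]
    exact sum_comm
  have hβ : ∀ k, ∑ j ∈ s, ∑ g ∈ s₂, b j g * W j k * v g =
      ∑ j ∈ s, (∑ g ∈ s₂, b j g * v g) * W j k := by
    intro k
    simp only [sum_mul]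
    exact sum_congr rfl fun j _ => sum_congr rfl fun g _ => by ring
  rw [sum_congr rfl fun k _ => by rw [hα, hβ], sum_mul_sum_of_orthonormal hW]
  simp only [sum_mul_sum]
  simp only [sum_mul]
  exact sum_comm.trans <| sum_congr rfl fun f _ => sum_comm.trans <|
    sum_congr rfl fun g _ => sum_congr rfl fun i _ => by ring

/-- the double Hodge star is a composition-algebra homomorphism:
*(ω₁∘ω₂) = (*ω₁)∘(*ω₂). -/
theorem stmt10 (n p q r : ℕ) (hp : p ≤ n) (hq : q ≤ n) (hr : r ≤ n)
    (ω₁ : DF n p q) (ω₂ : DF n r p) :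
    starDF hr hq (compDF ω₁ ω₂) = compDF (starDF hp hq ω₁) (starDF hr hp ω₂) := by
  funext x y
  simp only [starDF, compDF]
  exact (sum_sum_mul_sum_sum_of_orthonormal (fun f hf f' hf' =>
    sum_volDF_append_bv_mul hp (mem_Incr.mp hf) (mem_Incr.mp hf')) _ _ _ _ _ _).symm
end
end
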